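/- Let S be a nonempty finite type and A a type. Let γ ∈ [0, 1), R_max ≥ 0, ε ≥ 0, and let R : S → A → ℝ satisfy |R(s, a)| ≤ R_max for all s, a. Let P₁, P₂ : S → A → S → ℝ be row-stochastic transition functions: P_i(s, a, s') ≥ 0 for all s, a, s' and ∑_{s'} P_i(s, a, s') = 1 for all s, a and i = 1, 2. Let π : S → A be a deterministic policy, and suppose V₁, V₂ : S → ℝ satisfy the Bellman equations V_i(s) = R(s, π(s)) + γ · ∑_{s'} P_i(s, π(s), s') · V_i(s') for every s ∈ S and i = 1, 2. If (1/2) · ∑_{s'} |P₁(s, a, s') − P₂(s, a, s')| ≤ ε for all s ∈ S and a ∈ A, then |V₁(s) − V₂(s)| ≤ (2γ / (1 − γ)²) · R_max · ε for every s ∈ S. -/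
import Mathlib


/-- Value-difference bound: for a finite state space, a deterministic policy, and two
row-stochastic transition functions whose total-variation distance is uniformly at most
`ε`, the corresponding `γ`-discounted value functions (characterized by their Bellman
equations, with rewards bounded by `Rmax`) differ by at most `(2γ/(1-γ)²) Rmax ε`. -/
theorem value_difference_bound_of_tv_close
    {S A : Type*} [Fintype S] [Nonempty S]
    (γ Rmax ε : ℝ) (hγ₀ : 0 ≤ γ) (hγ₁ : γ < 1) (hRmax : 0 ≤ Rmax) (hε : 0 ≤ ε)
    (R : S → A → ℝ) (hR : ∀ s a, |R s a| ≤ Rmax)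
    (P₁ P₂ : S → A → S → ℝ)
    (hP₁_nonneg : ∀ s a s', 0 ≤ P₁ s a s')
    (hP₁_sum : ∀ s a, ∑ s', P₁ s a s' = 1)
    (hP₂_nonneg : ∀ s a s', 0 ≤ P₂ s a s')
    (hP₂_sum : ∀ s a, ∑ s', P₂ s a s' = 1)
    (pol : S → A) (V₁ V₂ : S → ℝ)
    (hV₁ : ∀ s, V₁ s = R s (pol s) + γ * ∑ s', P₁ s (pol s) s' * V₁ s')
    (hV₂ : ∀ s, V₂ s = R s (pol s) + γ * ∑ s', P₂ s (pol s) s' * V₂ s')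
    (hTV : ∀ s a, (1 / 2) * ∑ s', |P₁ s a s' - P₂ s a s'| ≤ ε) :
    ∀ s, |V₁ s - V₂ s| ≤ (2 * γ / (1 - γ) ^ 2) * Rmax * ε := by
  have h1γ : 0 < 1 - γ := by linarith
  -- bound on V₁
  obtain ⟨s₁, -, hs₁⟩ := Finset.exists_max_image Finset.univ (fun s => |V₁ s|)
    ⟨Classical.arbitrary S, Finset.mem_univ _⟩
  have hs₁' : ∀ s, |V₁ s| ≤ |V₁ s₁| := fun s => hs₁ s (Finset.mem_univ s)
  have hVbound : |V₁ s₁| ≤ Rmax / (1 - γ) := by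
    have hsum : |∑ s', P₁ s₁ (pol s₁) s' * V₁ s'| ≤ |V₁ s₁| := by
      calc |∑ s', P₁ s₁ (pol s₁) s' * V₁ s'|
          ≤ ∑ s', |P₁ s₁ (pol s₁) s' * V₁ s'| := Finset.abs_sum_le_sum_abs _ _
        _ ≤ ∑ s', P₁ s₁ (pol s₁) s' * |V₁ s₁| := by
            apply Finset.sum_le_sum
            intro i _
            rw [abs_mul, abs_of_nonneg (hP₁_nonneg _ _ _)]
            exact mul_le_mul_of_nonneg_left (hs₁' i) (hP₁_nonneg _ _ _)
        _ = |V₁ s₁| := by rw [← Finset.sum_mul, hP₁_sum, one_mul]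
    have := hV₁ s₁
    have habs : |V₁ s₁| ≤ Rmax + γ * |V₁ s₁| := by
      calc |V₁ s₁| = |R s₁ (pol s₁) + γ * ∑ s', P₁ s₁ (pol s₁) s' * V₁ s'| := by rw [← this]
        _ ≤ |R s₁ (pol s₁)| + |γ * ∑ s', P₁ s₁ (pol s₁) s' * V₁ s'| := abs_add_le _ _
        _ ≤ Rmax + γ * |V₁ s₁| := by
            rw [abs_mul, abs_of_nonneg hγ₀]
            exact add_le_add (hR _ _) (mul_le_mul_of_nonneg_left hsum hγ₀)
    rw [le_div_iff₀ h1γ]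
    nlinarith
  -- max of |V₁ - V₂|
  obtain ⟨s₀, -, hs₀⟩ := Finset.exists_max_image Finset.univ (fun s => |V₁ s - V₂ s|)
    ⟨Classical.arbitrary S, Finset.mem_univ _⟩
  have hs₀' : ∀ s, |V₁ s - V₂ s| ≤ |V₁ s₀ - V₂ s₀| := fun s => hs₀ s (Finset.mem_univ s)
  set M := |V₁ s₀ - V₂ s₀| with hM
  have hTV' : ∑ s', |P₁ s₀ (pol s₀) s' - P₂ s₀ (pol s₀) s'| ≤ 2 * ε := by
    have := hTV s₀ (pol s₀); linarith
  have key : M ≤ γ * (2 * ε * (Rmax / (1 - γ)) + M) := by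
    have hdiff : V₁ s₀ - V₂ s₀ = γ * ((∑ s', (P₁ s₀ (pol s₀) s' - P₂ s₀ (pol s₀) s') * V₁ s')
        + ∑ s', P₂ s₀ (pol s₀) s' * (V₁ s' - V₂ s')) := by
      rw [hV₁ s₀, hV₂ s₀]
      rw [Finset.sum_congr rfl (fun i _ => sub_mul (P₁ s₀ (pol s₀) i) (P₂ s₀ (pol s₀) i) (V₁ i)),
          Finset.sum_congr rfl (fun i _ => mul_sub (P₂ s₀ (pol s₀) i) (V₁ i) (V₂ i)),
          Finset.sum_sub_distrib, Finset.sum_sub_distrib]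
      ring
    calc M = |V₁ s₀ - V₂ s₀| := rfl
      _ = γ * |(∑ s', (P₁ s₀ (pol s₀) s' - P₂ s₀ (pol s₀) s') * V₁ s')
            + ∑ s', P₂ s₀ (pol s₀) s' * (V₁ s' - V₂ s')| := by
          rw [hdiff, abs_mul, abs_of_nonneg hγ₀]
      _ ≤ γ * (2 * ε * (Rmax / (1 - γ)) + M) := by
          apply mul_le_mul_of_nonneg_left _ hγ₀
          calc |(∑ s', (P₁ s₀ (pol s₀) s' - P₂ s₀ (pol s₀) s') * V₁ s')
                + ∑ s', P₂ s₀ (pol s₀) s' * (V₁ s' - V₂ s')|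
              ≤ |∑ s', (P₁ s₀ (pol s₀) s' - P₂ s₀ (pol s₀) s') * V₁ s'|
                + |∑ s', P₂ s₀ (pol s₀) s' * (V₁ s' - V₂ s')| := abs_add_le _ _
            _ ≤ 2 * ε * (Rmax / (1 - γ)) + M := by
                apply add_le_add
                · calc |∑ s', (P₁ s₀ (pol s₀) s' - P₂ s₀ (pol s₀) s') * V₁ s'|
                      ≤ ∑ s', |(P₁ s₀ (pol s₀) s' - P₂ s₀ (pol s₀) s') * V₁ s'| :=
                        Finset.abs_sum_le_sum_abs _ _
                    _ ≤ ∑ s', |P₁ s₀ (pol s₀) s' - P₂ s₀ (pol s₀) s'| * (Rmax / (1 - γ)) := by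
                        apply Finset.sum_le_sum; intro i _
                        rw [abs_mul]
                        exact mul_le_mul_of_nonneg_left ((hs₁' i).trans hVbound) (abs_nonneg _)
                    _ = (∑ s', |P₁ s₀ (pol s₀) s' - P₂ s₀ (pol s₀) s'|) * (Rmax / (1 - γ)) := by
                        rw [Finset.sum_mul]
                    _ ≤ 2 * ε * (Rmax / (1 - γ)) := by
                        apply mul_le_mul_of_nonneg_right hTV'
                        positivity
                · calc |∑ s', P₂ s₀ (pol s₀) s' * (V₁ s' - V₂ s')|
                      ≤ ∑ s', |P₂ s₀ (pol s₀) s' * (V₁ s' - V₂ s')| :=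
                        Finset.abs_sum_le_sum_abs _ _
                    _ ≤ ∑ s', P₂ s₀ (pol s₀) s' * M := by
                        apply Finset.sum_le_sum; intro i _
                        rw [abs_mul, abs_of_nonneg (hP₂_nonneg _ _ _)]
                        exact mul_le_mul_of_nonneg_left (hs₀' i) (hP₂_nonneg _ _ _)
                    _ = M := by rw [← Finset.sum_mul, hP₂_sum, one_mul]
  have hMbound : M ≤ (2 * γ / (1 - γ) ^ 2) * Rmax * ε := by
    have h2 : (1 - γ) * M ≤ 2 * γ * ε * Rmax / (1 - γ) := by
      have := key
      rw [div_eq_mul_inv] at *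
      nlinarith [mul_pos h1γ h1γ, (inv_pos.mpr h1γ)]
    have h3 : (1 - γ) * M * (1 - γ) ≤ 2 * γ * ε * Rmax := (le_div_iff₀ h1γ).mp h2
    rw [div_mul_eq_mul_div, div_mul_eq_mul_div, le_div_iff₀ (by positivity : (0:ℝ) < (1-γ)^2)]
    nlinarith
  intro s
  exact (hs₀' s).trans hMbound
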